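/- Let ε > 0, a, b ∈ ℝ, ν ∈ ℝ², and set N = (N₁, N₂) = (1, −b) ∈ ℝ². Let A : ℝ² × ℝ → ℝ² × ℝ be the linear map A(h, e) = (−εa h₁ + ε⟨N, h⟩ν₁ + N₂ e, −εa h₂ + ε⟨N, h⟩ν₂ − N₁ e, −εa e + N₂ h₁ − N₁ h₂). Then the characteristic polynomial of A equals ((X + εa)² − ‖N‖²) · (X + ε(a − ⟨ν, N⟩)), where ‖N‖² = 1 + b². In particular, A has eigenvalues −εa − ‖N‖, −ε(a − ⟨ν, N⟩), and −εa + ‖N‖; if a = ⟨ν, N⟩, the middle eigenvalue is 0. -/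

import Mathlib

/-! In the coordinates `(h₁, h₂, e)` the map is the matrix `boundaryMatrix ε a ν N`. Its term
`ε⟨N, h⟩ν` vanishes on the vectors `(N₂, −N₁, ±‖N‖)`, which are therefore eigenvectors for
`−εa ± ‖N‖`; the trace `−3εa + ε⟨ν, N⟩` then forces the third eigenvalue `−ε(a − ⟨ν, N⟩)`.
In the proof the factorisation is read off by expanding the 3 × 3 determinant. -/

open Polynomial

variable {R : Type*} [CommRing R]

def coordEquiv : ((Fin 2 → R) × R) ≃ₗ[R] (Fin 3 → R) where
  toFun u := ![u.1 0, u.1 1, u.2]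
  invFun v := (![v 0, v 1], v 2)
  map_add' u v := by ext i; fin_cases i <;> rfl
  map_smul' c u := by ext i; fin_cases i <;> rfl
  left_inv u := by ext i <;> [fin_cases i <;> rfl; rfl]
  right_inv v := by ext i; fin_cases i <;> rfl

def boundaryMatrix (ε a : R) (ν N : Fin 2 → R) : Matrix (Fin 3) (Fin 3) R :=
  !![-(ε * a) + ε * N 0 * ν 0, ε * N 1 * ν 0, N 1;
     ε * N 0 * ν 1, -(ε * a) + ε * N 1 * ν 1, -N 0;
     N 1, -N 0, -(ε * a)]

theorem charpoly_boundaryMatrix (ε a : R) (ν N : Fin 2 → R) :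
    (boundaryMatrix ε a ν N).charpoly =
      ((X + C (ε * a)) ^ 2 - C (N 0 ^ 2 + N 1 ^ 2)) * (X + C (ε * (a - ∑ i, ν i * N i))) := by
  simp only [Matrix.charpoly, Matrix.det_fin_three, Matrix.charmatrix_apply, boundaryMatrix,
    Matrix.of_apply, Matrix.cons_val', Matrix.cons_val_fin_one, Matrix.cons_val,
    Matrix.diagonal_apply, Fin.sum_univ_two, Fin.reduceEq, if_true, if_false, map_add, map_sub, map_neg, map_mul, map_pow]
  ring

theorem hasEigenvalue_of_charpoly_eq {V : Type*} [AddCommGroup V] [Module ℝ V]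
    [FiniteDimensional ℝ V] {f : Module.End ℝ V} {c d s : ℝ} (hs : 0 ≤ s)
    (hf : f.charpoly = ((X + C c) ^ 2 - C s) * (X + C d)) :
    f.HasEigenvalue (-c - √s) ∧ f.HasEigenvalue (-d) ∧ f.HasEigenvalue (-c + √s) := by
  simp only [Module.End.hasEigenvalue_iff_isRoot_charpoly, hf, IsRoot.def, eval_mul, eval_sub,
    eval_add, eval_pow, eval_X, eval_C, mul_eq_zero]
  have hsq := Real.sq_sqrt hs
  exact ⟨.inl (by linear_combination hsq), .inr (by ring), .inl (by linear_combination hsq)⟩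

theorem stmt_3 (ε a b : ℝ) (ν : Fin 2 → ℝ)
    (N : Fin 2 → ℝ) (hN : N = ![1, -b])
    (A : ((Fin 2 → ℝ) × ℝ) →ₗ[ℝ] ((Fin 2 → ℝ) × ℝ))
    (hA : ∀ u : (Fin 2 → ℝ) × ℝ,
      A u = (![-(ε * a) * u.1 0 + ε * (∑ i, N i * u.1 i) * ν 0 + N 1 * u.2,
              -(ε * a) * u.1 1 + ε * (∑ i, N i * u.1 i) * ν 1 - N 0 * u.2],
             -(ε * a) * u.2 + N 1 * u.1 0 - N 0 * u.1 1)) :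
    A.charpoly = ((X + C (ε * a)) ^ 2 - C (1 + b ^ 2))
        * (X + C (ε * (a - ∑ i, ν i * N i))) ∧
    Module.End.HasEigenvalue A (-(ε * a) - Real.sqrt (1 + b ^ 2)) ∧
    Module.End.HasEigenvalue A (-(ε * (a - ∑ i, ν i * N i))) ∧
    Module.End.HasEigenvalue A (-(ε * a) + Real.sqrt (1 + b ^ 2)) ∧
    (a = ∑ i, ν i * N i → Module.End.HasEigenvalue A 0) := by
  have hconj : coordEquiv.conj A = (boundaryMatrix ε a ν N).toLin' := by
    ext v i
    fin_cases i <;> simp [LinearEquiv.conj_apply, coordEquiv, boundaryMatrix, hA,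
      Matrix.mulVec, dotProduct, Fin.sum_univ_succ] <;> ring
  have hP : A.charpoly = ((X + C (ε * a)) ^ 2 - C (1 + b ^ 2))
      * (X + C (ε * (a - ∑ i, ν i * N i))) := by
    rw [← coordEquiv.charpoly_conj, hconj, Matrix.charpoly_toLin', charpoly_boundaryMatrix, hN]
    norm_num
  obtain ⟨hminus, hmid, hplus⟩ := hasEigenvalue_of_charpoly_eq (by positivity) hP
  exact ⟨hP, hminus, hmid, hplus, fun h => by simpa [h] using hmid⟩
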